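/- arXiv:1707.08197 — 6 statements merged into one kernel-verified Lean document; each statement's English description precedes it below -/
import Mathlib

section
/- A string T of length n has at most n-1 left-maximal repeats, where a left-maximal repeat is a substring W occurring at least twice such that at least two distinct characters a satisfy that aW is a substring of T. -/
/-- Number of occurrences (starting positions) of `W` in `T`; positions range over
`0..T.length` so that the empty string is counted `T.length + 1` times. -/
def numOcc {α : Type*} [DecidableEq α] (W T : List α) : ℕ :=
  (List.range (T.length + 1)).countP (fun p => decide (W <+: T.drop p))

/-- `W` is a left-maximal repeat of `T`: it occurs at least twice in `T`, and at least two
distinct characters `a` satisfy that `a :: W` is a substring of `T`. -/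
def LeftMaximalRepeat {α : Type*} [DecidableEq α] (W T : List α) : Prop :=
  W <:+: T ∧ 2 ≤ numOcc W T ∧
    ∃ a b : α, a ≠ b ∧ (a :: W) <:+: T ∧ (b :: W) <:+: T

/-!
Send `W` to the length `e` of the shortest prefix `P` of `T` in which `W` has two distinct
left extensions, so `2 ≤ e ≤ |T|`. Let `Q` be `P` without its last letter. By minimality one
of the two extensions of `W` in `P` does not occur in `Q`, so it is a suffix of `P`; hence if
`W` and `W'` share the value `e`, both are suffixes of `P`. Say `W` is a proper suffix of
`W'`, ending `d :: W`. At most one of the two extensions of `W'` in `P` is a suffix of `P`, so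
`W'`, hence `d :: W`, occurs in `Q`. An extension `c :: W` with `c ≠ d` cannot be a suffix of
`P` either, so it occurs in `Q` too, and `W` would already have two left extensions in `Q`.
-/

namespace List

variable {α : Type*}

theorem IsSuffix.exists_cons_isSuffix_of_ne {l₁ l₂ : List α} (h : l₁ <:+ l₂)
    (hne : l₁ ≠ l₂) : ∃ d, d :: l₁ <:+ l₂ := by
  obtain ⟨V, rfl⟩ := h
  obtain ⟨V₀, d, rfl⟩ := V.eq_nil_or_concat.resolve_left (by rintro rfl; exact hne rfl)
  exact ⟨d, V₀, by simp⟩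

theorem head_eq_of_cons_isSuffix {a b : α} {l P : List α} (ha : a :: l <:+ P)
    (hb : b :: l <:+ P) : a = b :=
  (cons_eq_cons.1 <| (suffix_of_suffix_length_le ha hb le_rfl).eq_of_length rfl).1

end List

open List

section

variable {α : Type*} {W W' P Q : List α} {x : α}

def LeftBranching (W P : List α) : Prop :=
  ∃ a b, a ≠ b ∧ a :: W <:+: P ∧ b :: W <:+: P

namespace LeftBranching

theorem length_add_two_le (h : LeftBranching W P) : W.length + 2 ≤ P.length := by
  obtain ⟨a, b, hab, ha, hb⟩ := h
  by_contra! hP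
  have haP := ha.eq_of_length_le (by simp; omega)
  have hbP := hb.eq_of_length_le (by simp; omega)
  exact hab (cons_eq_cons.1 (haP.trans hbP.symm)).1

theorem isInfix_of_append_singleton (h : LeftBranching W (Q ++ [x])) : W <:+: Q := by
  obtain ⟨a, b, hab, ha, hb⟩ := h
  rcases infix_concat_iff.1 ha with ha | ha
  · rcases infix_concat_iff.1 hb with hb | hb
    · exact absurd (head_eq_of_cons_isSuffix ha hb) hab
    · exact (suffix_cons b W).isInfix.trans hb
  · exact (suffix_cons a W).isInfix.trans ha

theorem isSuffix_of_not_leftBranching (h : LeftBranching W (Q ++ [x]))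
    (hQ : ¬ LeftBranching W Q) : W <:+ Q ++ [x] := by
  obtain ⟨a, b, hab, ha, hb⟩ := h
  rcases infix_concat_iff.1 ha with ha | ha
  · exact (suffix_cons a W).trans ha
  rcases infix_concat_iff.1 hb with hb | hb
  · exact (suffix_cons b W).trans hb
  · exact absurd ⟨a, b, hab, ha, hb⟩ hQ

theorem eq_of_isSuffix (hWW' : W <:+ W') (hW : LeftBranching W (Q ++ [x]))
    (hW' : LeftBranching W' (Q ++ [x])) (hQ : ¬ LeftBranching W Q) (hW'P : W' <:+ Q ++ [x]) :
    W = W' := by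
  by_contra hne
  obtain ⟨d, hd⟩ := hWW'.exists_cons_isSuffix_of_ne hne
  have hdP : d :: W <:+ Q ++ [x] := hd.trans hW'P
  have hdQ : d :: W <:+: Q := hd.isInfix.trans hW'.isInfix_of_append_singleton
  obtain ⟨a, b, hab, ha, hb⟩ := hW
  obtain ⟨c, hcd, hc⟩ : ∃ c, c ≠ d ∧ c :: W <:+: Q ++ [x] := by
    by_cases had : a = d
    · exact ⟨b, fun hbd => hab (had.trans hbd.symm), hb⟩
    · exact ⟨a, had, ha⟩
  have hcQ : c :: W <:+: Q :=
    (infix_concat_iff.1 hc).resolve_left fun hcP => hcd (head_eq_of_cons_isSuffix hcP hdP)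
  exact hQ ⟨c, d, hcd, hcQ, hdQ⟩

theorem eq_of_not_leftBranching (hW : LeftBranching W (Q ++ [x]))
    (hW' : LeftBranching W' (Q ++ [x])) (hQ : ¬ LeftBranching W Q)
    (hQ' : ¬ LeftBranching W' Q) : W = W' := by
  have hWP := hW.isSuffix_of_not_leftBranching hQ
  have hW'P := hW'.isSuffix_of_not_leftBranching hQ'
  rcases suffix_or_suffix_of_suffix hWP hW'P with h | h
  · exact eq_of_isSuffix h hW hW' hQ hW'P
  · exact (eq_of_isSuffix h hW' hW hQ' hWP).symm

end LeftBranching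

section BranchingPrefixLength

variable (T : List α)

noncomputable def branchingPrefixLength (W : List α) : ℕ :=
  sInf {e | LeftBranching W (T.take e)}

variable {T}

theorem leftBranching_take_branchingPrefixLength (hW : LeftBranching W T) :
    LeftBranching W (T.take (branchingPrefixLength T W)) :=
  Nat.sInf_mem (s := {e | LeftBranching W (T.take e)}) ⟨T.length, by simpa using hW⟩

theorem branchingPrefixLength_le_length (hW : LeftBranching W T) :
    branchingPrefixLength T W ≤ T.length :=
  Nat.sInf_le (s := {e | LeftBranching W (T.take e)}) (by simpa using hW)

theorem two_le_branchingPrefixLength (hW : LeftBranching W T) :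
    2 ≤ branchingPrefixLength T W := by
  have := (leftBranching_take_branchingPrefixLength hW).length_add_two_le
  have := length_take_le (branchingPrefixLength T W) T
  omega

theorem not_leftBranching_take_pred (hW : LeftBranching W T) :
    ¬ LeftBranching W (T.take (branchingPrefixLength T W - 1)) :=
  Nat.notMem_of_lt_sInf (s := {e | LeftBranching W (T.take e)})
    (Nat.sub_one_lt (by have := two_le_branchingPrefixLength hW; omega))

theorem exists_take_branchingPrefixLength_eq (hW : LeftBranching W T) :
    ∃ x, T.take (branchingPrefixLength T W) = T.take (branchingPrefixLength T W - 1) ++ [x] := by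
  have h2 := two_le_branchingPrefixLength hW
  have hle := branchingPrefixLength_le_length hW
  refine ⟨T[branchingPrefixLength T W - 1], ?_⟩
  conv_lhs => rw [show branchingPrefixLength T W = branchingPrefixLength T W - 1 + 1 by omega]
  simp [take_add_one]

theorem branchingPrefixLength_injOn :
    Set.InjOn (branchingPrefixLength T) {W | LeftBranching W T} := by
  intro W hW W' hW' heq
  obtain ⟨x, hx⟩ := exists_take_branchingPrefixLength_eq hW
  have hWP := leftBranching_take_branchingPrefixLength hW
  have hW'P := leftBranching_take_branchingPrefixLength hW'
  have hQ' := not_leftBranching_take_pred hW'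
  rw [← heq] at hW'P hQ'
  rw [hx] at hWP hW'P
  exact hWP.eq_of_not_leftBranching hW'P (not_leftBranching_take_pred hW) hQ'

theorem mapsTo_branchingPrefixLength :
    Set.MapsTo (branchingPrefixLength T) {W | LeftBranching W T} (Set.Icc 2 T.length) :=
  fun _ hW => ⟨two_le_branchingPrefixLength hW, branchingPrefixLength_le_length hW⟩

end BranchingPrefixLength

theorem finite_setOf_leftBranching (T : List α) : {W | LeftBranching W T}.Finite :=
  (Set.finite_Icc _ _).of_injOn mapsTo_branchingPrefixLength branchingPrefixLength_injOn

theorem ncard_setOf_leftBranching_le (T : List α) :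
    {W | LeftBranching W T}.ncard ≤ T.length - 1 := by
  calc {W | LeftBranching W T}.ncard ≤ (Set.Icc 2 T.length).ncard :=
        Set.ncard_le_ncard_of_injOn _ mapsTo_branchingPrefixLength branchingPrefixLength_injOn
          (Set.finite_Icc _ _)
    _ = T.length - 1 := by rw [Set.ncard_Icc_nat]; omega

end

theorem leftMaximalRepeats_card_le_general {α : Type*} [DecidableEq α]
    (T : List α) :
    {W : List α | LeftMaximalRepeat W T}.Finite ∧
    {W : List α | LeftMaximalRepeat W T}.ncard ≤ T.length - 1 := by
  have hsub : {W | LeftMaximalRepeat W T} ⊆ {W | LeftBranching W T} := fun _ hW => hW.2.2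
  exact ⟨(finite_setOf_leftBranching T).subset hsub,
    (Set.ncard_le_ncard hsub (finite_setOf_leftBranching T)).trans
      (ncard_setOf_leftBranching_le T)⟩

/-- A string of length `n ≥ 1` over a finite alphabet has at most `n - 1` left-maximal
repeats. -/
theorem leftMaximalRepeats_card_le {α : Type*} [DecidableEq α] [Fintype α]
    (T : List α) (hn : 1 ≤ T.length) :
    {W : List α | LeftMaximalRepeat W T}.Finite ∧
    {W : List α | LeftMaximalRepeat W T}.ncard ≤ T.length - 1 :=
  leftMaximalRepeats_card_le_general T
end

section
/- Every minimal absent word of T can be written as aVb where a, b are single characters and V is a maximal repeat of T (or the empty string, which is a maximal repeat by convention, assuming T contains at least two distinct characters). -/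
/-- The set of left extensions of `W` in `T`, with `none` acting as a sentinel extension for
an occurrence of `W` at the very beginning of `T`. -/
def leftExts {α : Type*} (W T : List α) : Set (Option α) :=
  {o | o.elim (W <+: T) (fun a => (a :: W) <:+: T)}

/-- The set of right extensions of `W` in `T`, with `none` acting as a sentinel extension for
an occurrence of `W` at the very end of `T`. -/
def rightExts {α : Type*} (W T : List α) : Set (Option α) :=
  {o | o.elim (W <:+ T) (fun b => (W ++ [b]) <:+: T)}

/-- `W` has at least two distinct left extensions in `T`. -/
def LeftMaximal {α : Type*} (W T : List α) : Prop :=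
  ∃ x ∈ leftExts W T, ∃ y ∈ leftExts W T, x ≠ y

/-- `W` has at least two distinct right extensions in `T`. -/
def RightMaximal {α : Type*} (W T : List α) : Prop :=
  ∃ x ∈ rightExts W T, ∃ y ∈ rightExts W T, x ≠ y

/-- `W` is a maximal repeat of `T`: a substring occurring more than once that is both
left-maximal and right-maximal. -/
def MaximalRepeat {α : Type*} [DecidableEq α] (W T : List α) : Prop :=
  W <:+: T ∧ 2 ≤ numOcc W T ∧ LeftMaximal W T ∧ RightMaximal W T

/-- `W` is a minimal absent word of `T`: a string of length at least 2 that does not occur in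
`T`, all of whose proper substrings occur in `T`. -/
def MinimalAbsentWord {α : Type*} (W T : List α) : Prop :=
  2 ≤ W.length ∧ ¬ (W <:+: T) ∧ ∀ U, U <:+: W → U ≠ W → U <:+: T

lemma prefix_drop_infix {α : Type*} {l t : List α} {p : ℕ} (h : l <+: t.drop p) :
    l <:+: t := by
  obtain ⟨u, hu⟩ := h
  exact ⟨t.take p, u, by rw [List.append_assoc, hu, List.take_append_drop]⟩

lemma infix_exists_drop {α : Type*} {l t : List α} (h : l <:+: t) :
    ∃ p ≤ t.length, l <+: t.drop p := by
  obtain ⟨s, u, rfl⟩ := h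
  refine ⟨s.length, by simp, u, ?_⟩
  rw [List.append_assoc, List.drop_left]

lemma two_le_countP {p : ℕ → Bool} {l : List ℕ} {a b : ℕ}
    (ha : a ∈ l) (hb : b ∈ l) (hab : a ≠ b) (hpa : p a = true) (hpb : p b = true) :
    2 ≤ l.countP p := by
  rw [List.countP_eq_length_filter]
  have ha' : a ∈ l.filter p := List.mem_filter.2 ⟨ha, hpa⟩
  have hb' : b ∈ l.filter p := List.mem_filter.2 ⟨hb, hpb⟩
  rcases hf : l.filter p with _ | ⟨x, _ | ⟨y, xs⟩⟩
  · rw [hf] at ha'; simp at ha'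
  · rw [hf] at ha' hb'
    simp at ha' hb'
    exact absurd (ha'.trans hb'.symm) hab
  · simp

/-- Every minimal absent word of `T` can be written as `aVb` where `a`, `b` are single
characters and `V` is a maximal repeat of `T` (possibly the empty string), assuming `T`
contains at least two distinct characters. -/
theorem minimalAbsentWord_eq_maximalRepeat_extension {α : Type*} [DecidableEq α]
    (T : List α) (hT : ∃ x ∈ T, ∃ y ∈ T, x ≠ y) (W : List α)
    (hW : MinimalAbsentWord W T) :
    ∃ (a : α) (V : List α) (b : α), W = a :: (V ++ [b]) ∧ MaximalRepeat V T := by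
  clear hT
  obtain ⟨hlen, habs, hsub⟩ := hW
  obtain ⟨a, R, rfl⟩ : ∃ a R, W = a :: R := by
    cases W with
    | nil => simp at hlen
    | cons a R => exact ⟨a, R, rfl⟩
  have hR : R ≠ [] := by rintro rfl; simp at hlen
  obtain ⟨V, b, rfl⟩ : ∃ V b, R = V ++ [b] :=
    ⟨R.dropLast, R.getLast hR, (List.dropLast_append_getLast hR).symm⟩
  refine ⟨a, V, b, rfl, ?_⟩
  -- no occurrence of W anywhere
  have hnoW : ∀ m, ¬ ((a :: (V ++ [b])) <+: T.drop m) :=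
    fun m hm => habs (prefix_drop_infix hm)
  -- proper substrings occur
  have h1 : (a :: V) <:+: T := by
    refine hsub _ ⟨[], [b], by simp⟩ ?_
    intro h
    apply_fun List.length at h
    simp at h
  have h2 : (V ++ [b]) <:+: T := by
    refine hsub _ ⟨[a], [], by simp⟩ ?_
    intro h
    apply_fun List.length at h
    simp at h
  obtain ⟨p, hp, hp1⟩ := infix_exists_drop h1
  obtain ⟨q, hq, hq1⟩ := infix_exists_drop h2
  obtain ⟨r, hr⟩ := hp1
  have hdp : T.drop p = a :: (V ++ r) := by rw [← hr]; simp
  have hd1 : T.drop (p + 1) = V ++ r := by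
    rw [← List.drop_drop, hdp]; simp
  have hplt : p < T.length := by
    by_contra h
    push_neg at h
    rw [List.drop_eq_nil_of_le h] at hdp
    exact absurd hdp (by simp)
  -- V occurs at p+1 and q, which are distinct
  have hVp : V <+: T.drop (p + 1) := by rw [hd1]; exact ⟨r, rfl⟩
  have hVq : V <+: T.drop q := (List.prefix_append V [b]).trans hq1
  have hne : p + 1 ≠ q := by
    rintro rfl
    apply hnoW p
    rw [hdp, List.cons_prefix_cons]
    exact ⟨rfl, hd1 ▸ hq1⟩
  have hnum : 2 ≤ numOcc V T := by
    refine two_le_countP (a := p + 1) (b := q) ?_ ?_ hne ?_ ?_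
    · exact List.mem_range.2 (by omega)
    · exact List.mem_range.2 (by omega)
    · exact decide_eq_true hVp
    · exact decide_eq_true hVq
  refine ⟨prefix_drop_infix hVq, hnum, ?_, ?_⟩
  · -- LeftMaximal
    rcases q with _ | q'
    · refine ⟨none, ?_, some a, h1, by simp⟩
      exact hVq
    · have hq'lt : q' < T.length := by omega
      have hdq' : T.drop q' = T[q']'hq'lt :: T.drop (q' + 1) :=
        List.drop_eq_getElem_cons hq'lt
      set c := T[q']'hq'lt with hc
      have hcW : (c :: (V ++ [b])) <+: T.drop q' := by
        rw [hdq', List.cons_prefix_cons]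
        exact ⟨rfl, hq1⟩
      have hcV : (c :: V) <:+: T :=
        prefix_drop_infix (((List.prefix_append (c :: V) [b]).trans (by simpa using hcW)))
      have hca : c ≠ a := by
        rintro rfl
        exact hnoW q' hcW
      exact ⟨some c, hcV, some a, h1, by simpa using hca⟩
  · -- RightMaximal
    rcases r with _ | ⟨c, r'⟩
    · refine ⟨none, ?_, some b, h2, by simp⟩
      have : V <:+ T := by
        rw [List.append_nil] at hd1
        exact hd1 ▸ List.drop_suffix _ _
      exact this
    · have hVc : (V ++ [c]) <:+: T := by
        apply prefix_drop_infix (p := p + 1)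
        rw [hd1]
        exact ⟨r', by simp⟩
      have hcb : c ≠ b := by
        rintro rfl
        apply hnoW p
        rw [hdp]
        exact ⟨r', by simp⟩
      exact ⟨some c, hVc, some b, h2, by simpa using hcb⟩
end

section
/- If V is a right-maximal substring of T that is not left-maximal, then there is a unique character a such that aV occurs in T, and aV is also right-maximal with the same right-extension set as V (every occurrence of V in T, except possibly one at position 1, is preceded by a). -/
/-- The set of ending positions of the occurrences of `U` in `T`. -/
def endSet {α : Type*} (U T : List α) : Set ℕ :=
  {j | ∃ p, p + U.length = j ∧ j ≤ T.length ∧ U <+: T.drop p}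

/-- If `V` is a right-maximal substring of `T` (a string ending in a unique sentinel) that is
not left-maximal, then there is a unique character `a` such that `aV` occurs in `T`; moreover
`aV` is right-maximal with the same right-extension set as `V`, and every occurrence of `V`
at a position `p > 0` is preceded by `a`. -/
theorem rightMaximal_not_leftMaximal_unique_left_extension {α : Type*} [DecidableEq α]
    (T T' : List α) (sent : α) (hT : T = T' ++ [sent]) (hsent : sent ∉ T')
    (V : List α) (hocc : V <:+: T) (hr : RightMaximal V T) (hl : ¬ LeftMaximal V T) :
    ∃ a : α, ((a :: V) <:+: T ∧ RightMaximal (a :: V) T ∧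
        rightExts (a :: V) T = rightExts V T ∧
        (∀ p, 0 < p → p ≤ T.length → V <+: T.drop p → (a :: V) <+: T.drop (p - 1))) ∧
      ∀ a' : α, (a' :: V) <:+: T → a' = a := by
  classical
  -- not left-maximal means leftExts is a subsingleton
  have hsub : ∀ x ∈ leftExts V T, ∀ y ∈ leftExts V T, x = y := by
    intro x hx y hy
    by_contra h
    exact hl ⟨x, hx, y, hy, h⟩
  -- V is nonempty
  have hVne : V ≠ [] := by
    rintro rfl
    refine hl ⟨none, ?_, some sent, ?_, by simp⟩
    · show ([] : List α) <+: T
      exact List.nil_prefix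
    · show [sent] <:+: T
      exact (hT ▸ List.suffix_append T' [sent]).isInfix
  -- occurrences force positions below length
  have hlt : ∀ p : ℕ, V <+: T.drop p → p < T.length := by
    intro p hp
    by_contra h
    push_neg at h
    rw [List.drop_eq_nil_of_le h] at hp
    exact hVne (List.prefix_nil.mp hp)
  -- infix iff occurrence at a drop
  have hinf : ∀ W : List α, W <:+: T → ∃ p, W <+: T.drop p := by
    intro W hW
    obtain ⟨t, hpre, hsuf⟩ := List.infix_iff_prefix_suffix.mp hW
    exact ⟨T.length - t.length, by rwa [← List.suffix_iff_eq_drop.mp hsuf]⟩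
  -- there is an occurrence of V at a positive position
  have hpos : ∃ p, 0 < p ∧ V <+: T.drop p := by
    obtain ⟨x, hx, y, hy, hxy⟩ := hr
    have key : ∀ b : α, (V ++ [b]) <:+: T → V <:+ T →
        ∃ p, 0 < p ∧ V <+: T.drop p := by
      intro b hb hsV
      obtain ⟨p, hp⟩ := hinf _ hb
      have hVp : V <+: T.drop p := (List.prefix_append V [b]).trans hp
      have hlen : p + V.length + 1 ≤ T.length := by
        have := hp.length_le
        simp at this
        omega
      have hps : T.length - V.length > p := by
        have : V.length ≤ T.length := hsV.length_le
        omega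
      refine ⟨T.length - V.length, by omega, ?_⟩
      rw [← List.suffix_iff_eq_drop.mp hsV]
    match x, y with
    | none, none => exact absurd rfl hxy
    | none, some b => exact key b hy hx
    | some b, none => exact key b hx hy
    | some b1, some b2 =>
      obtain ⟨p1, hp1⟩ := hinf _ hx
      obtain ⟨p2, hp2⟩ := hinf _ hy
      have hne : p1 ≠ p2 := by
        rintro rfl
        have := (List.prefix_or_prefix_of_prefix hp1 hp2).elim
          (fun h => h.eq_of_length (by simp)) (fun h => (h.eq_of_length (by simp)).symm)
        simp at this
        exact hxy (by rw [this])
      rcases Nat.lt_or_ge 0 p1 with h | h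
      · exact ⟨p1, h, (List.prefix_append V [b1]).trans hp1⟩
      · exact ⟨p2, by omega, (List.prefix_append V [b2]).trans hp2⟩
  obtain ⟨p0, hp0pos, hp0⟩ := hpos
  have hp0lt : p0 < T.length := hlt _ hp0
  have hp0lt' : p0 - 1 < T.length := by omega
  set a : α := T[p0 - 1] with ha
  have hdrop0 : T.drop (p0 - 1) = a :: T.drop p0 := by
    have h1 : p0 - 1 + 1 = p0 := by omega
    rw [List.drop_eq_getElem_cons hp0lt', h1]
  have haVpre : (a :: V) <+: T.drop (p0 - 1) := by
    rw [hdrop0]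
    exact List.cons_prefix_cons.mpr ⟨rfl, hp0⟩
  have haV : (a :: V) <:+: T :=
    List.infix_iff_prefix_suffix.mpr ⟨_, haVpre, List.drop_suffix _ _⟩
  have huniq : ∀ a' : α, (a' :: V) <:+: T → a' = a := by
    intro a' h
    have : (some a' : Option α) = some a := hsub (some a') h (some a) haV
    exact Option.some.inj this
  have hnp : ¬ V <+: T := by
    intro h
    have : (none : Option α) = some a := hsub none h (some a) haV
    simp at this
  -- core: any occurrence of V at positive p is preceded by a
  have hcore : ∀ p, 0 < p → V <+: T.drop p → T.drop (p - 1) = a :: T.drop p := by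
    intro p hppos hp
    have hplt : p < T.length := hlt _ hp
    have hplt' : p - 1 < T.length := by omega
    have hd : T.drop (p - 1) = T[p - 1] :: T.drop p := by
      have h1 : p - 1 + 1 = p := by omega
      rw [List.drop_eq_getElem_cons hplt', h1]
    have hpre : (T[p - 1] :: V) <+: T.drop (p - 1) := by
      rw [hd]; exact List.cons_prefix_cons.mpr ⟨rfl, hp⟩
    have : T[p - 1] = a :=
      huniq _ (List.infix_iff_prefix_suffix.mpr ⟨_, hpre, List.drop_suffix _ _⟩)
    rw [hd, this]
  have hforall : ∀ p, 0 < p → p ≤ T.length → V <+: T.drop p → (a :: V) <+: T.drop (p - 1) := by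
    intro p h1 _ h3
    rw [hcore p h1 h3]
    exact List.cons_prefix_cons.mpr ⟨rfl, h3⟩
  -- right extension sets agree
  have hEq : rightExts (a :: V) T = rightExts V T := by
    ext o
    cases o with
    | none =>
      show (a :: V) <:+ T ↔ V <:+ T
      constructor
      · exact fun h => (List.suffix_cons a V).trans h
      · intro h
        have hVlt : V.length < T.length := by
          rcases Nat.lt_or_ge V.length T.length with h' | h'
          · exact h'
          · exact absurd (List.suffix_iff_eq_drop.mp h ▸ by
              simp [List.drop_eq_nil_of_le, Nat.sub_eq_zero_of_le h'] : V <+: T) hnp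
        set p := T.length - V.length with hpdef
        have hppos : 0 < p := by omega
        have hVdrop : V <+: T.drop p := by
          rw [← List.suffix_iff_eq_drop.mp h]
        have := hcore p hppos hVdrop
        rw [← List.suffix_iff_eq_drop.mp h] at this
        rw [← this]
        exact List.drop_suffix _ _
    | some b =>
      show ((a :: V) ++ [b]) <:+: T ↔ (V ++ [b]) <:+: T
      constructor
      · intro h
        exact (List.suffix_cons a (V ++ [b])).isInfix.trans h
      · intro h
        obtain ⟨p, hp⟩ := hinf _ h
        have hVp : V <+: T.drop p := (List.prefix_append V [b]).trans hp
        have hppos : 0 < p := by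
          rcases Nat.eq_zero_or_pos p with rfl | h'
          · simp at hVp; exact absurd hVp hnp
          · exact h'
        have hd := hcore p hppos hVp
        have : (a :: (V ++ [b])) <+: T.drop (p - 1) := by
          rw [hd]; exact List.cons_prefix_cons.mpr ⟨rfl, hp⟩
        exact List.infix_iff_prefix_suffix.mpr ⟨_, this, List.drop_suffix _ _⟩
  have hrm : RightMaximal (a :: V) T := by
    obtain ⟨x, hx, y, hy, hxy⟩ := hr
    exact ⟨x, hEq ▸ hx, y, hEq ▸ hy, hxy⟩
  exact ⟨a, ⟨haV, hrm, hEq, hforall⟩, huniq⟩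
end

section
/- For any string T ending in a unique sentinel, every suffix of a maximal repeat of T that is right-maximal determines the maximal repeat: if W1 and W2 are maximal repeats of T and some string V is simultaneously a suffix of W1 and of W2 with the same occurrence-ending-position set as both W1 and W2, then W1 = W2. -/
lemma mem_endSet_suffix_take {α : Type*} {U T : List α} {j : ℕ}
    (h : j ∈ endSet U T) : U <:+ T.take j := by
  obtain ⟨p, hp, hj, t, ht⟩ := h
  refine ⟨T.take p, ?_⟩
  rw [← hp, List.take_add, ← ht, List.take_left]

lemma length_le_of_mem_endSet {α : Type*} {U T : List α} {j : ℕ}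
    (h : j ∈ endSet U T) : U.length ≤ j := by
  obtain ⟨p, hp, -, -⟩ := h; omega

lemma infix_mem_endSet {α : Type*} {U T s t : List α} (hT : T = s ++ U ++ t) :
    s.length + U.length ∈ endSet U T := by
  refine ⟨s.length, rfl, ?_, t, ?_⟩
  · simp [hT]
  · rw [hT, List.append_assoc, List.drop_left]

lemma key_suffix_eq {α : Type*} [DecidableEq α] {W1 W2 T : List α}
    (hlm : LeftMaximal W1 T)
    (he : endSet W1 T = endSet W2 T) (hsuf : W1 <:+ W2) : W1 = W2 := by
  by_contra hne
  obtain ⟨X, hX⟩ := hsuf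
  have hXne : X ≠ [] := by rintro rfl; simp at hX; exact hne hX
  obtain ⟨Y, a, rfl⟩ := X.eq_nil_or_concat.resolve_left hXne
  have hX' : Y ++ [a] ++ W1 = W2 := by simpa using hX
  have haW1 : a :: W1 <:+ W2 := ⟨Y, by rw [← hX']; simp⟩
  have hlen : W2.length = Y.length + 1 + W1.length := by rw [← hX']; simp; omega
  have hall : ∀ o ∈ leftExts W1 T, o = some a := by
    rintro (_ | b) ho
    · obtain ⟨t, ht⟩ := ho
      have hmem : W1.length ∈ endSet W1 T := by
        have := infix_mem_endSet (U := W1) (T := T) (s := []) (t := t) (by simp [← ht])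
        simpa using this
      rw [he] at hmem
      have := length_le_of_mem_endSet hmem
      omega
    · obtain ⟨s, t, hst⟩ := ho
      set j := s.length + (b :: W1).length with hj
      have hbm : j ∈ endSet (b :: W1) T := infix_mem_endSet hst.symm
      have hmem1 : j ∈ endSet W1 T := by
        refine ⟨s.length + 1, by simp [hj]; omega, ?_, t, ?_⟩
        · exact (hbm.choose_spec.2.1)
        · have hT : T = (s ++ [b]) ++ W1 ++ t := by rw [← hst]; simp
          have hl : s.length + 1 = (s ++ [b]).length := by simp
          rw [hT, List.append_assoc, hl, List.drop_left]
      rw [he] at hmem1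
      have hW2 : W2 <:+ T.take j := mem_endSet_suffix_take hmem1
      have hbW1 : b :: W1 <:+ T.take j := mem_endSet_suffix_take hbm
      have haW1' : a :: W1 <:+ T.take j := haW1.trans hW2
      have heq : b :: W1 = a :: W1 := by
        rcases List.suffix_or_suffix_of_suffix hbW1 haW1' with h | h
        · exact h.eq_of_length (by simp)
        · exact (h.eq_of_length (by simp)).symm
      simp at heq
      simp [heq]
  obtain ⟨x, hx, y, hy, hxy⟩ := hlm
  exact hxy ((hall x hx).trans (hall y hy).symm)

/-- In a string `T` ending in a unique sentinel, a right-maximal suffix in the equivalence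
class determines the maximal repeat: if `W1` and `W2` are maximal repeats of `T` and `V` is a
suffix of both with the same occurrence-ending-position set as both, then `W1 = W2`. -/
theorem maximalRepeat_unique_of_class_suffix {α : Type*} [DecidableEq α]
    (T T' : List α) (sent : α) (hT : T = T' ++ [sent]) (hsent : sent ∉ T')
    (W1 W2 V : List α) (h1 : MaximalRepeat W1 T) (h2 : MaximalRepeat W2 T)
    (hs1 : V <:+ W1) (hs2 : V <:+ W2)
    (he1 : endSet V T = endSet W1 T) (he2 : endSet V T = endSet W2 T) :
    W1 = W2 := by
  have he : endSet W1 T = endSet W2 T := he1.symm.trans he2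
  obtain ⟨s, t, hst⟩ := h1.1
  set j := s.length + W1.length with hj
  have hmem1 : j ∈ endSet W1 T := infix_mem_endSet hst.symm
  have hmem2 : j ∈ endSet W2 T := he ▸ hmem1
  have h1' : W1 <:+ T.take j := mem_endSet_suffix_take hmem1
  have h2' : W2 <:+ T.take j := mem_endSet_suffix_take hmem2
  rcases List.suffix_or_suffix_of_suffix h1' h2' with h | h
  · exact key_suffix_eq h1.2.2.1 he h
  · exact (key_suffix_eq h2.2.2.1 he.symm h).symm
end

section
/- In the family of strings T_0 = "0", T_i = T_{i-1} · c_i · T_{i-1} (c_i fresh characters), the number of distinct maximal repeats of T_i (with a sentinel appended) is O(i), i.e., grows linearly in i while |T_i| grows exponentially. Concretely, the maximal repeats of T_i# are exactly the strings T_j for 0 ≤ j < i together with the empty string. -/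
/-!
Read `T_i #` as a ruler word: its letter at position `t ≥ 1` has level `ν₂ t`, where level `0` is
the letter `0`, level `k ∈ [1, i]` is `c_k` and level `i + 1` is the sentinel; freshness makes the
level of a letter recoverable from the letter. Let `W` be a nonempty repeat and `K` the top level
inside one occurrence. Then that occurrence spans fewer than `2 ^ (K + 1)` positions and its
level-`K` position is `2 ^ K` mod `2 ^ (K + 1)`; since the levels along `W` do not depend on the
occurrence, all occurrences of `W` are congruent mod `2 ^ (K + 1)`. The letters just before and
just after an occurrence are then determined by that residue unless it is `0`, so left- and
right-maximality make `W` start and end next to multiples of `2 ^ (K + 1)`: `W` is the ruler word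
of length `2 ^ (K + 1) - 1`, which is `T_K`. The sentinel, the unique letter of top level, cannot
lie inside a repeat.
-/

theorem padicValNat_mod_pow {p x k : ℕ} [Fact p.Prime] (h : x % p ^ k ≠ 0) :
    padicValNat p (x % p ^ k) = padicValNat p x := by
  have hx : x ≠ 0 := by rintro rfl; simp at h
  refine eq_of_forall_le_iff fun n => ?_
  rw [← padicValNat_dvd_iff_le h, ← padicValNat_dvd_iff_le hx]
  rcases le_or_gt n k with hn | hn
  · exact Nat.dvd_mod_iff (pow_dvd_pow p hn)
  · have hk : p ^ k ∣ p ^ n := pow_dvd_pow p hn.le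
    refine iff_of_false (fun hr => ?_) (fun hx' => h (Nat.mod_eq_zero_of_dvd (hk.trans hx')))
    exact h (Nat.eq_zero_of_dvd_of_lt (hk.trans hr)
      (Nat.mod_lt _ (pow_pos (Fact.out : p.Prime).pos k)))

theorem mod_two_pow_padicValNat_succ {x : ℕ} (hx : x ≠ 0) :
    x % 2 ^ (padicValNat 2 x + 1) = 2 ^ padicValNat 2 x := by
  obtain ⟨e, u, hu, rfl⟩ := Nat.exists_eq_pow_mul_and_not_dvd hx 2 (by norm_num)
  have hu0 : u ≠ 0 := by rintro rfl; simp at hu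
  rw [padicValNat.mul (pow_ne_zero _ two_ne_zero) hu0, padicValNat.prime_pow,
    padicValNat.eq_zero_of_not_dvd hu, add_zero, pow_succ, Nat.mul_mod_mul_left,
    Nat.two_dvd_ne_zero.mp hu, mul_one]

theorem exists_lt_dvd_add_succ {M m : ℕ} (p : ℕ) (hM : 0 < M) (hm : M ≤ m) :
    ∃ t < m, M ∣ p + t + 1 := by
  refine ⟨M - 1 - p % M, by omega, p / M + 1, ?_⟩
  have := Nat.div_add_mod p M
  have := Nat.mod_lt p hM
  rw [mul_add, mul_one]
  omega

namespace List

variable {α : Type*} {W T : List α}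

theorem exists_prefix_drop_of_isInfix (h : W <:+: T) : ∃ q, W <+: T.drop q := by
  obtain ⟨s, t, rfl⟩ := h
  exact ⟨s.length, by simp⟩

theorem add_length_le_of_prefix_drop {q : ℕ} (h : W <+: T.drop q) (hW : W ≠ []) :
    q + W.length ≤ T.length := by
  have := h.length_le
  have := length_pos_iff.mpr hW
  simp only [length_drop] at *
  omega

theorem prefix_drop_succ_of_cons_prefix_drop {a : α} {q : ℕ} (h : a :: W <+: T.drop q) :
    W <+: T.drop (q + 1) := by
  obtain ⟨u, hu⟩ := h
  exact ⟨u, by rw [← tail_drop, ← hu]; rfl⟩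

end List

section MaximalRepeat

variable {α : Type*} [DecidableEq α] {W T : List α}

theorem two_le_numOcc_iff : 2 ≤ numOcc W T ↔
    ∃ p ≤ T.length, ∃ q ≤ T.length, p ≠ q ∧ W <+: T.drop p ∧ W <+: T.drop q := by
  have hcard : numOcc W T = ((Finset.range (T.length + 1)).filter (W <+: T.drop ·)).card := by
    simp [numOcc, List.countP_eq_length_filter, Finset.card, Finset.filter_val, Finset.range_val,
      Multiset.range]
  rw [hcard, show 2 ≤ _ ↔ 1 < _ from Iff.rfl, Finset.one_lt_card_iff]
  simp only [Finset.mem_filter, Finset.mem_range, Nat.lt_succ_iff]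
  constructor
  · rintro ⟨p, q, ⟨hp, hWp⟩, ⟨hq, hWq⟩, hpq⟩
    exact ⟨p, hp, q, hq, hpq, hWp, hWq⟩
  · rintro ⟨p, hp, q, hq, hpq, hWp, hWq⟩
    exact ⟨p, q, ⟨hp, hWp⟩, ⟨hq, hWq⟩, hpq⟩

theorem maximalRepeat_nil (hT : T ≠ []) : MaximalRepeat [] T := by
  obtain ⟨a, ha⟩ := List.exists_mem_of_ne_nil T hT
  have haT : [a] <:+: T := (List.singleton_infix_iff a T).mpr ha
  have hlen : 1 ≤ T.length := List.length_pos_iff.mpr hT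
  exact ⟨List.nil_infix, two_le_numOcc_iff.mpr ⟨0, by simp, 1, hlen, by simp, by simp, by simp⟩,
    ⟨none, List.nil_prefix, some a, haT, by simp⟩, ⟨none, List.nil_suffix, some a, haT, by simp⟩⟩

theorem maximalRepeat_of_prefix_of_isInfix {U : List α} {a b : α} (h₁ : U ++ a :: U <+: T)
    (h₂ : U ++ [b] <:+: T) (hab : a ≠ b) : MaximalRepeat U T := by
  obtain ⟨r, rfl⟩ := h₁
  have hU : U <+: U ++ a :: U ++ r := by simp [List.append_assoc]
  refine ⟨hU.isInfix,
    two_le_numOcc_iff.mpr ⟨0, by simp, U.length + 1, by simp, by simp, by simp, ?_⟩,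
    ⟨none, hU, some a, ?_, by simp⟩, ⟨some a, ?_, some b, h₂, by simpa using hab⟩⟩
  · simp [List.append_assoc]
  · exact ⟨U, r, by simp⟩
  · exact ⟨[], U ++ r, by simp⟩

end MaximalRepeat

section Ruler

variable {α : Type*} (g : ℕ → α)

def ruler (n : ℕ) : List α :=
  (List.range n).map fun t => g (padicValNat 2 (t + 1))

@[simp]
theorem length_ruler (n : ℕ) : (ruler g n).length = n := by
  simp [ruler]

theorem getElem?_ruler {n t : ℕ} (ht : t < n) :
    (ruler g n)[t]? = some (g (padicValNat 2 (t + 1))) := by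
  simp [ruler, ht]

theorem ruler_succ (n : ℕ) : ruler g (n + 1) = ruler g n ++ [g (padicValNat 2 (n + 1))] := by
  simp [ruler, List.range_succ]

theorem ruler_two_pow (k : ℕ) : ruler g (2 ^ k) = ruler g (2 ^ k - 1) ++ [g k] := by
  have h := ruler_succ g (2 ^ k - 1)
  rwa [Nat.sub_add_cancel Nat.one_le_two_pow, padicValNat.prime_pow] at h

theorem ruler_two_pow_succ (k : ℕ) :
    ruler g (2 ^ (k + 2) - 1) =
      ruler g (2 ^ (k + 1) - 1) ++ [g (k + 1)] ++ ruler g (2 ^ (k + 1) - 1) := by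
  have hM : 1 ≤ 2 ^ (k + 1) := Nat.one_le_two_pow
  have hsplit : 2 ^ (k + 2) - 1 = 2 ^ (k + 1) + (2 ^ (k + 1) - 1) := by
    rw [pow_succ 2 (k + 1)]; omega
  rw [hsplit, ruler, List.range_add, List.map_append, ← ruler, ruler_two_pow, List.map_map]
  congr 1
  refine List.map_congr_left fun t ht => ?_
  have ht : t + 1 < 2 ^ (k + 1) := by simp at ht; omega
  have hmod : (2 ^ (k + 1) + t + 1) % 2 ^ (k + 1) = t + 1 := by
    rw [add_assoc, Nat.add_mod_left, Nat.mod_eq_of_lt ht]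
  simp only [Function.comp_apply]
  rw [← padicValNat_mod_pow (by rw [hmod]; omega), hmod]

variable {g}

theorem getElem?_of_prefix_drop_ruler {n q t : ℕ} {W : List α} (hW : W <+: (ruler g n).drop q)
    (ht : t < W.length) : W[t]? = some (g (padicValNat 2 (q + t + 1))) := by
  have hlt := List.add_length_le_of_prefix_drop hW (List.ne_nil_of_length_pos (by omega))
  rw [length_ruler] at hlt
  rw [List.getElem?_eq_getElem ht, ← List.prefix_iff_getElem?.mp hW t ht, List.getElem?_drop,
    add_comm q t, getElem?_ruler g (by omega), add_comm t q]

theorem padicValNat_eq_of_prefix_drop_ruler {L n q₁ q₂ t : ℕ} {W : List α}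
    (hg : Set.InjOn g (Set.Iic L)) (hn : n < 2 ^ (L + 1)) (h₁ : W <+: (ruler g n).drop q₁)
    (h₂ : W <+: (ruler g n).drop q₂) (ht : t < W.length) :
    padicValNat 2 (q₁ + t + 1) = padicValNat 2 (q₂ + t + 1) := by
  have hle : ∀ q, W <+: (ruler g n).drop q → padicValNat 2 (q + t + 1) ∈ Set.Iic L := by
    intro q hq
    have := List.add_length_le_of_prefix_drop hq (List.ne_nil_of_length_pos (by omega))
    rw [length_ruler] at this
    exact Nat.lt_succ_iff.mp ((padicValNat_le_nat_log _).trans_lt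
      (Nat.log_lt_of_lt_pow (by omega) (by omega)))
  refine hg (hle q₁ h₁) (hle q₂ h₂) (Option.some.inj ?_)
  rw [← getElem?_of_prefix_drop_ruler h₁ ht, getElem?_of_prefix_drop_ruler h₂ ht]

theorem exists_modEq_of_prefix_drop_ruler {L n p : ℕ} {W : List α} (hg : Set.InjOn g (Set.Iic L))
    (hn : n < 2 ^ (L + 1)) (hW : W ≠ []) (hp : W <+: (ruler g n).drop p) :
    ∃ K, W.length < 2 ^ (K + 1) ∧
      ∀ q, W <+: (ruler g n).drop q → q ≡ p [MOD 2 ^ (K + 1)] := by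
  obtain ⟨t₀, ht₀, hmax⟩ := Finset.exists_max_image (Finset.range W.length)
    (fun t => padicValNat 2 (p + t + 1)) (by simpa [List.length_pos_iff] using hW)
  rw [Finset.mem_range] at ht₀
  refine ⟨padicValNat 2 (p + t₀ + 1), ?_, fun q hq => ?_⟩
  · by_contra! hlen
    obtain ⟨t, ht, hdvd⟩ := exists_lt_dvd_add_succ p (by positivity) hlen
    have := (padicValNat_dvd_iff_le (p := 2) (Nat.add_one_ne_zero _)).mp hdvd
    have := hmax t (Finset.mem_range.mpr ht)
    omega
  · have hv := padicValNat_eq_of_prefix_drop_ruler hg hn hq hp ht₀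
    have hq' := mod_two_pow_padicValNat_succ (Nat.add_one_ne_zero (q + t₀))
    rw [hv] at hq'
    exact Nat.ModEq.add_right_cancel' (t₀ + 1)
      (hq'.trans (mod_two_pow_padicValNat_succ (Nat.add_one_ne_zero (p + t₀))).symm)

theorem leftExts_ruler_subset {n p k : ℕ} {W : List α}
    (hcong : ∀ q, W <+: (ruler g n).drop q → q ≡ p [MOD 2 ^ k]) (hp : p % 2 ^ k ≠ 0) :
    leftExts W (ruler g n) ⊆ {some (g (padicValNat 2 (p % 2 ^ k)))} := by
  rintro (_ | d) h
  · have h₀ : W <+: (ruler g n).drop 0 := show W <+: ruler g n from h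
    exact absurd (Eq.trans (hcong 0 h₀).symm (Nat.zero_mod _)) hp
  · obtain ⟨q, hq⟩ := List.exists_prefix_drop_of_isInfix (show d :: W <:+: ruler g n from h)
    have hd := getElem?_of_prefix_drop_ruler hq (t := 0) (by simp)
    have hmod : (q + 1) % 2 ^ k = p % 2 ^ k :=
      hcong (q + 1) (List.prefix_drop_succ_of_cons_prefix_drop hq)
    simp only [List.getElem?_cons_zero, add_zero, Option.some.injEq] at hd
    rw [Set.mem_singleton_iff, hd, ← hmod, padicValNat_mod_pow (hmod ▸ hp)]

theorem rightExts_ruler_subset {n p k : ℕ} {W : List α}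
    (hcong : ∀ q, W <+: (ruler g n).drop q → q ≡ p [MOD 2 ^ k]) (hsuf : ¬ W <:+ ruler g n)
    (hp : (p + W.length + 1) % 2 ^ k ≠ 0) :
    rightExts W (ruler g n) ⊆ {some (g (padicValNat 2 ((p + W.length + 1) % 2 ^ k)))} := by
  rintro (_ | b) h
  · exact absurd h hsuf
  · obtain ⟨q, hq⟩ := List.exists_prefix_drop_of_isInfix (show W ++ [b] <:+: ruler g n from h)
    have hb := getElem?_of_prefix_drop_ruler hq (t := W.length) (by simp)
    have hmod : (q + W.length + 1) % 2 ^ k = (p + W.length + 1) % 2 ^ k :=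
      ((hcong q ((List.prefix_append W [b]).trans hq)).add_right _).add_right _
    simp only [List.getElem?_append_right le_rfl, Nat.sub_self, List.getElem?_cons_zero,
      Option.some.injEq] at hb
    rw [Set.mem_singleton_iff, hb, ← hmod, padicValNat_mod_pow (hmod ▸ hp)]

theorem eq_of_prefix_drop_ruler_two_pow_of_isSuffix {L q₁ q₂ : ℕ} {W : List α}
    (hg : Set.InjOn g (Set.Iic L)) (hW : W ≠ []) (hsuf : W <:+ ruler g (2 ^ L))
    (h₁ : W <+: (ruler g (2 ^ L)).drop q₁) (h₂ : W <+: (ruler g (2 ^ L)).drop q₂) : q₁ = q₂ := by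
  obtain ⟨s, hs⟩ := hsuf
  have hm := List.length_pos_iff.mpr hW
  have hlen : s.length + W.length = 2 ^ L := by simpa using congrArg List.length hs
  have h₀ : W <+: (ruler g (2 ^ L)).drop s.length := ⟨[], by simp [← hs]⟩
  -- the last letter of `W` is the only letter of level `L`, so it pins down every occurrence
  have hend : ∀ q, W <+: (ruler g (2 ^ L)).drop q → q + W.length = 2 ^ L := by
    intro q hq
    have hv := padicValNat_eq_of_prefix_drop_ruler hg (Nat.pow_lt_pow_succ one_lt_two) hq h₀
      (Nat.sub_lt hm one_pos)
    rw [show s.length + (W.length - 1) + 1 = 2 ^ L by omega, padicValNat.prime_pow] at hv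
    have hdvd : 2 ^ L ∣ q + W.length := by
      rw [show q + W.length = q + (W.length - 1) + 1 by omega]
      exact (padicValNat_dvd_iff_le (by omega)).mpr hv.ge
    have := List.add_length_le_of_prefix_drop hq hW
    rw [length_ruler] at this
    exact le_antisymm this (Nat.le_of_dvd (by omega) hdvd)
  have := hend q₁ h₁
  have := hend q₂ h₂
  omega

theorem eq_ruler_of_prefix_drop_ruler {n p k : ℕ} {W : List α} (hW : W <+: (ruler g n).drop p)
    (hp : 2 ^ k ∣ p) (hm : W.length < 2 ^ k) : W = ruler g W.length := by
  refine List.ext_getElem? fun t => ?_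
  rcases lt_or_ge t W.length with ht | ht
  · have hmod : (p + t + 1) % 2 ^ k = t + 1 := by
      rw [add_assoc, Nat.add_mod, Nat.mod_eq_zero_of_dvd hp, zero_add, Nat.mod_mod,
        Nat.mod_eq_of_lt (by omega)]
    rw [getElem?_of_prefix_drop_ruler hW ht, getElem?_ruler g ht, ← hmod,
      padicValNat_mod_pow (by omega)]
  · rw [List.getElem?_eq_none ht, List.getElem?_eq_none (by simpa using ht)]

theorem exists_eq_ruler_of_maximalRepeat_ruler [DecidableEq α] {L : ℕ} {W : List α}
    (hg : Set.InjOn g (Set.Iic L)) (hW : MaximalRepeat W (ruler g (2 ^ L))) (hne : W ≠ []) :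
    ∃ K, K + 1 < L ∧ W = ruler g (2 ^ (K + 1) - 1) := by
  obtain ⟨-, hocc, ⟨x, hx, y, hy, hxy⟩, ⟨x', hx', y', hy', hxy'⟩⟩ := hW
  obtain ⟨p, -, q, -, hpq, hp, hq⟩ := two_le_numOcc_iff.mp hocc
  obtain ⟨K, hm, hcong⟩ :=
    exists_modEq_of_prefix_drop_ruler hg (Nat.pow_lt_pow_succ one_lt_two) hne hp
  have hp0 : p % 2 ^ (K + 1) = 0 := by
    by_contra h
    have hsub := leftExts_ruler_subset hcong h
    exact hxy ((hsub hx).trans (hsub hy).symm)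
  have hsuf : ¬ W <:+ ruler g (2 ^ L) := fun h =>
    hpq (eq_of_prefix_drop_ruler_two_pow_of_isSuffix hg hne h hp hq)
  have hpm : (p + W.length + 1) % 2 ^ (K + 1) = 0 := by
    by_contra h
    have hsub := rightExts_ruler_subset hcong hsuf h
    exact hxy' ((hsub hx').trans (hsub hy').symm)
  have hm1 : W.length + 1 = 2 ^ (K + 1) := by
    have hdvd : 2 ^ (K + 1) ∣ W.length + 1 := by
      rw [← Nat.dvd_add_right (Nat.dvd_of_mod_eq_zero hp0), ← add_assoc]
      exact Nat.dvd_of_mod_eq_zero hpm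
    exact le_antisymm (by omega) (Nat.le_of_dvd (by omega) hdvd)
  refine ⟨K, ?_, (eq_ruler_of_prefix_drop_ruler hp (Nat.dvd_of_mod_eq_zero hp0) hm).trans
    (by rw [← hm1, Nat.add_sub_cancel])⟩
  -- `p ≠ q` are multiples of `2 ^ (K + 1)`, so the later one is at least `2 ^ (K + 1)`
  have hq0 : 2 ^ (K + 1) ∣ q := Nat.dvd_of_mod_eq_zero (Eq.trans (hcong q hq) hp0)
  have hp' := List.add_length_le_of_prefix_drop hp hne
  have hq' := List.add_length_le_of_prefix_drop hq hne
  rw [length_ruler] at hp' hq'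
  by_contra! hL
  have := Nat.pow_le_pow_right two_pos hL
  rcases Nat.lt_or_gt_of_ne hpq with h | h
  · have := Nat.le_of_dvd (by omega) hq0; omega
  · have := Nat.le_of_dvd (by omega) (Nat.dvd_of_mod_eq_zero hp0); omega

end Ruler

section Doubling

variable {α : Type*} {f : ℕ → List α} {a : ℕ → α}

theorem isPrefix_of_doubling (hrec : ∀ j, f (j + 1) = f j ++ [a j] ++ f j) {j k : ℕ}
    (h : j ≤ k) : f j <+: f k := by
  induction k, h using Nat.le_induction with
  | base => exact List.prefix_refl _
  | succ k _ ih =>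
    exact ih.trans (by rw [hrec, List.append_assoc]; exact List.prefix_append _ _)

theorem isSuffix_of_doubling (hrec : ∀ j, f (j + 1) = f j ++ [a j] ++ f j) {j k : ℕ}
    (h : j ≤ k) : f j <:+ f k := by
  induction k, h using Nat.le_induction with
  | base => exact List.suffix_refl _
  | succ k _ ih => exact ih.trans (by rw [hrec]; exact List.suffix_append _ _)

theorem strictMono_length_doubling (hrec : ∀ j, f (j + 1) = f j ++ [a j] ++ f j) :
    StrictMono fun j => (f j).length :=
  strictMono_nat_of_lt_succ fun j => by simp [hrec]

theorem maximalRepeat_doubling [DecidableEq α] (hrec : ∀ j, f (j + 1) = f j ++ [a j] ++ f j)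
    {b : α} {i j : ℕ} (hj : j < i) (hb : a j ≠ b) : MaximalRepeat (f j) (f i ++ [b]) := by
  refine maximalRepeat_of_prefix_of_isInfix ?_ ?_ hb
  · have h := isPrefix_of_doubling hrec hj
    rw [hrec, List.append_assoc, List.singleton_append] at h
    exact h.trans (List.prefix_append _ _)
  · obtain ⟨s, hs⟩ := isSuffix_of_doubling hrec hj.le
    exact ⟨s, [], by rw [← hs, List.append_nil, List.append_assoc]⟩

theorem eq_ruler_of_doubling {g : ℕ → α} {i : ℕ} (h0 : f 0 = [g 0])
    (hrec : ∀ j < i, f (j + 1) = f j ++ [g (j + 1)] ++ f j) :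
    ∀ j ≤ i, f j = ruler g (2 ^ (j + 1) - 1)
  | 0, _ => by simp [h0, ruler]
  | j + 1, hj => by
    rw [hrec j hj, eq_ruler_of_doubling h0 hrec j (by omega), ruler_two_pow_succ]

theorem ncard_insert_nil_doubling (hrec : ∀ j, f (j + 1) = f j ++ [a j] ++ f j) (h0 : f 0 ≠ [])
    (i : ℕ) : (insert [] {W | ∃ j, j < i ∧ W = f j}).ncard = i + 1 := by
  have hlen := strictMono_length_doubling hrec
  have himage : {W | ∃ j, j < i ∧ W = f j} = f '' Set.Iio i := by
    ext W
    simp [eq_comm]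
  rw [himage, Set.ncard_insert_of_notMem ?_ ((Set.finite_Iio i).image f),
    (Function.Injective.of_comp (f := List.length) hlen.injective).injOn.ncard_image,
    ← Finset.coe_Iio, Set.ncard_coe_finset, Nat.card_Iio]
  rintro ⟨j, -, hj⟩
  have := hlen.monotone (Nat.zero_le j)
  simp only [hj, List.length_nil, Nat.le_zero, List.length_eq_zero_iff] at this
  exact h0 this

end Doubling

def doublingLetter (c : ℕ → ℕ) (sent i k : ℕ) : ℕ :=
  if k = 0 then 0 else if k ≤ i then c k else sent

theorem injOn_doublingLetter {c : ℕ → ℕ} {sent i : ℕ}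
    (hinj : ∀ j k, 1 ≤ j → j ≤ i → 1 ≤ k → k ≤ i → c j = c k → j = k)
    (hfresh : ∀ j, 1 ≤ j → j ≤ i → c j ≠ 0 ∧ c j ≠ sent) (hsent : sent ≠ 0) :
    Set.InjOn (doublingLetter c sent i) (Set.Iic (i + 1)) := by
  intro k hk l hl h
  simp only [Set.mem_Iic] at hk hl
  unfold doublingLetter at h
  split_ifs at h <;> grind

/-- For the family `T_0 = "0"`, `T_i = T_{i-1} · c_i · T_{i-1}` with fresh characters `c_i`,
the maximal repeats of `T_i #` are exactly the empty string together with the strings `T_j`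
for `0 ≤ j < i`; in particular there are exactly `i + 1` of them, linearly many in `i`. -/
theorem maximalRepeats_of_doubling_family (c : ℕ → ℕ) (f : ℕ → List ℕ) (sent : ℕ) (i : ℕ)
    (h0 : f 0 = [0]) (hrec : ∀ j, f (j + 1) = f j ++ [c (j + 1)] ++ f j)
    (hinj : ∀ j k, 1 ≤ j → j ≤ i → 1 ≤ k → k ≤ i → c j = c k → j = k)
    (hfresh : ∀ j, 1 ≤ j → j ≤ i → c j ≠ 0 ∧ c j ≠ sent) (hsent : sent ≠ 0) :
    {W : List ℕ | MaximalRepeat W (f i ++ [sent])} =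
      insert [] {W : List ℕ | ∃ j, j < i ∧ W = f j} ∧
    {W : List ℕ | MaximalRepeat W (f i ++ [sent])}.ncard = i + 1 := by
  set g := doublingLetter c sent i
  have hf : ∀ j ≤ i, f j = ruler g (2 ^ (j + 1) - 1) :=
    eq_ruler_of_doubling (by simp [g, doublingLetter, h0]) fun j hj => by
      simp [g, doublingLetter, hrec, Nat.succ_le_of_lt hj]
  have hS : f i ++ [sent] = ruler g (2 ^ (i + 1)) := by
    simp [ruler_two_pow, hf i le_rfl, g, doublingLetter]
  have hset : {W | MaximalRepeat W (f i ++ [sent])} = insert [] {W | ∃ j, j < i ∧ W = f j} := by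
    ext W
    refine ⟨fun hW => ?_, ?_⟩
    · by_cases hne : W = []
      · exact Or.inl hne
      rw [hS] at hW
      obtain ⟨K, hK, rfl⟩ := exists_eq_ruler_of_maximalRepeat_ruler
        (injOn_doublingLetter hinj hfresh hsent) hW hne
      exact Or.inr ⟨K, by omega, (hf K (by omega)).symm⟩
    · rintro (rfl | ⟨j, hj, rfl⟩)
      · exact maximalRepeat_nil (by simp)
      · exact maximalRepeat_doubling hrec hj (hfresh (j + 1) (by omega) hj).2
  exact ⟨hset, hset ▸ ncard_insert_nil_doubling hrec (by simp [h0]) i⟩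
end

section
/- With notation as in the BWT-interval offset property: let W be a maximal repeat of T with equivalence class {W[1..m],...,W[k..m]}, let [p_i..q_i] be the suffix array interval of W[i..m], let c be a character, and let [x_i..y_i] be the suffix array interval of W[i..m]c (assumed nonempty for all i). Then x_i - p_i = x_1 - p_1 and y_i - p_i = y_1 - p_1 for all i in [1..k]; that is, the offset of the child interval within the parent interval is the same for all members of the equivalence class. -/
lemma List.drop_eq_append_drop_of_prefix {α : Type*} {U T : List α} {j : ℕ}
    (h : U <+: T.drop j) : T.drop j = U ++ T.drop (j + U.length) := by
  rw [← List.drop_drop]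
  exact (List.prefix_iff_eq_append.1 h).symm

lemma Fin.ncard_setOf_val_mem_Ico {n a b : ℕ} (hb : b ≤ n) :
    {r : Fin n | a ≤ (r : ℕ) ∧ (r : ℕ) < b}.ncard = b - a := by
  have himage :
      Fin.val '' {r : Fin n | a ≤ (r : ℕ) ∧ (r : ℕ) < b} = ↑(Finset.Ico a b) := by
    ext j
    simp only [Set.mem_image, Set.mem_ofPred_eq, Finset.coe_Ico, Set.mem_Ico]
    exact ⟨by rintro ⟨r, hr, rfl⟩; exact hr, fun hj => ⟨⟨j, by omega⟩, hj, rfl⟩⟩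
  rw [← Set.ncard_image_of_injective _ Fin.val_injective, himage, Set.ncard_coe_finset,
    Nat.card_Ico]

section SuffixArray

variable {α : Type*} {T : List α} {sa : Fin T.length → Fin T.length}

def IsSAInterval (T : List α) (sa : Fin T.length → Fin T.length) (V : List α) (x y : ℕ) :
    Prop :=
  ∀ r : Fin T.length, V <+: T.drop (sa r) ↔ x ≤ (r : ℕ) ∧ (r : ℕ) ≤ y

variable {U V : List α} {p q x y : ℕ}

lemma exists_rank_of_infix (hbij : Function.Bijective sa) (hV : V ≠ [])
    (h : V <:+: T) : ∃ r, V <+: T.drop (sa r) := by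
  obtain ⟨s, t, rfl⟩ := h
  have hs : s.length < (s ++ V ++ t).length := by
    simp [List.length_pos_iff.2 hV]
  obtain ⟨r, hr⟩ := hbij.2 ⟨s.length, hs⟩
  exact ⟨r, by simp [hr, List.append_assoc]⟩

lemma IsSAInterval.le_of_infix (hbij : Function.Bijective sa)
    (hV : IsSAInterval T sa V x y) (hne : V ≠ []) (h : V <:+: T) : x ≤ y := by
  obtain ⟨r, hr⟩ := exists_rank_of_infix hbij hne h
  have := (hV r).1 hr
  omega

lemma IsSAInterval.le_and_le_of_append (hparent : IsSAInterval T sa U p q)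
    (hchild : IsSAInterval T sa (U ++ V) x y) (hxy : x ≤ y) (hy : y < T.length) :
    p ≤ x ∧ y ≤ q := by
  have hpx :=
    (hparent ⟨x, by omega⟩).1 ((U.prefix_append V).trans ((hchild _).2 ⟨le_rfl, hxy⟩))
  have hyq := (hparent ⟨y, hy⟩).1 ((U.prefix_append V).trans ((hchild _).2 ⟨hxy, le_rfl⟩))
  exact ⟨hpx.1, hyq.2⟩

lemma ncard_ranks_eq_ncard_endSet (hbij : Function.Bijective sa) (hU : U ≠ [])
    (P : List α → Prop) :
    {r : Fin T.length | U <+: T.drop (sa r) ∧ P (T.drop (sa r + U.length))}.ncard =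
      {e | e ∈ endSet U T ∧ P (T.drop e)}.ncard := by
  refine Set.ncard_congr (fun r _ => sa r + U.length) ?_ ?_ ?_
  · rintro r ⟨hr, hP⟩
    refine ⟨⟨sa r, rfl, ?_, hr⟩, hP⟩
    have := hr.length_le
    simp only [List.length_drop] at this
    omega
  · intro r s _ _ h
    exact hbij.1 (Fin.val_injective (by omega))
  · rintro e ⟨⟨j, rfl, hle, hj⟩, hP⟩
    have : U.length ≠ 0 := by simpa using hU
    obtain ⟨r, hr⟩ := hbij.2 ⟨j, by omega⟩
    exact ⟨r, ⟨by rw [hr]; exact hj, by rw [hr]; exact hP⟩, by rw [hr]⟩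

end SuffixArray

section SortedSuffixArray

variable {α : Type*} [LinearOrder α] {T : List α} {sa : Fin T.length → Fin T.length}

def SortsSuffixes (T : List α) (sa : Fin T.length → Fin T.length) : Prop :=
  ∀ r s : Fin T.length, r ≤ s → ¬ List.Lex (· < ·) (T.drop (sa s)) (T.drop (sa r))

lemma SortsSuffixes.lt_of_lex (hsorted : SortsSuffixes T sa) {r s : Fin T.length}
    (h : List.Lex (· < ·) (T.drop (sa r)) (T.drop (sa s))) : r < s :=
  lt_of_not_ge fun hsr => hsorted s r hsr h

variable {U : List α} {c : α} {p q x y : ℕ}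

lemma SortsSuffixes.val_lt_iff_forall_head_lt (hsorted : SortsSuffixes T sa)
    (hchild : IsSAInterval T sa (U ++ [c]) x y) (hxy : x ≤ y) (hy : y < T.length)
    {r : Fin T.length} (hr : U <+: T.drop (sa r)) :
    (r : ℕ) < x ↔ ∀ b ∈ (T.drop (sa r + U.length)).head?, b < c := by
  set rx : Fin T.length := ⟨x, by omega⟩
  obtain ⟨u, hu⟩ := (hchild rx).2 ⟨le_rfl, hxy⟩
  rw [List.append_assoc, List.singleton_append] at hu
  have hsplit := List.drop_eq_append_drop_of_prefix hr
  constructor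
  · intro hrx b hb
    obtain ⟨tl, htl⟩ := List.head?_eq_some_iff.1 (Option.mem_def.1 hb)
    rcases lt_trichotomy b c with hbc | rfl | hcb
    · exact hbc
    · have := (hchild r).1 ⟨tl, by rw [hsplit, htl]; simp⟩
      omega
    · have : x < (r : ℕ) := hsorted.lt_of_lex (r := rx) (by
        rw [← hu, hsplit, htl]; exact (List.Lex.rel hcb).append_left _ U)
      omega
  · intro hhead
    have htail : List.Lex (· < ·) (T.drop (sa r + U.length)) (c :: u) := by
      cases h : T.drop (sa r + U.length) with
      | nil => exact List.Lex.nil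
      | cons b tl => exact List.Lex.rel (hhead b (by simp [h]))
    exact Fin.lt_def.1 (hsorted.lt_of_lex (s := rx) (by
      rw [hsplit, ← hu]; exact htail.append_left _ U))

lemma SortsSuffixes.val_le_iff_forall_head_le (hsorted : SortsSuffixes T sa)
    (hchild : IsSAInterval T sa (U ++ [c]) x y) (hxy : x ≤ y) (hy : y < T.length)
    {r : Fin T.length} (hr : U <+: T.drop (sa r)) :
    (r : ℕ) ≤ y ↔ ∀ b ∈ (T.drop (sa r + U.length)).head?, b ≤ c := by
  have hlt := hsorted.val_lt_iff_forall_head_lt hchild hxy hy hr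
  constructor
  · intro hry b hb
    by_cases hrx : (r : ℕ) < x
    · exact (hlt.1 hrx b hb).le
    · obtain ⟨t, ht⟩ := (hchild r).2 ⟨by omega, hry⟩
      rw [List.drop_eq_append_drop_of_prefix hr, List.append_assoc, List.singleton_append] at ht
      rw [← List.append_cancel_left ht, List.head?_cons, Option.mem_some_iff] at hb
      exact hb.ge
  · intro hhead
    by_contra! hyr
    obtain ⟨b, hb, hcb⟩ : ∃ b ∈ (T.drop (sa r + U.length)).head?, ¬ b < c := by
      by_contra! h
      have := hlt.2 h
      omega
    have hbc : b = c := le_antisymm (hhead b hb) (not_lt.1 hcb)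
    obtain ⟨tl, htl⟩ := List.head?_eq_some_iff.1 (Option.mem_def.1 hb)
    have := (hchild r).1 ⟨tl, by rw [List.drop_eq_append_drop_of_prefix hr, htl, hbc]; simp⟩
    omega

lemma SortsSuffixes.child_start_sub_eq_ncard (hsorted : SortsSuffixes T sa)
    (hbij : Function.Bijective sa) (hU : U ≠ []) (hparent : IsSAInterval T sa U p q)
    (hchild : IsSAInterval T sa (U ++ [c]) x y) (hxy : x ≤ y) (hy : y < T.length) :
    x - p = {e | e ∈ endSet U T ∧ ∀ b ∈ (T.drop e).head?, b < c}.ncard := by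
  have hxq := (hparent.le_and_le_of_append hchild hxy hy).2
  rw [← ncard_ranks_eq_ncard_endSet hbij hU (fun t => ∀ b ∈ t.head?, b < c),
    ← Fin.ncard_setOf_val_mem_Ico (n := T.length) (by omega)]
  refine congrArg Set.ncard (Set.ext fun r => ?_)
  simp only [Set.mem_ofPred_eq]
  constructor
  · rintro ⟨hpr, hrx⟩
    have hr := (hparent r).2 ⟨hpr, by omega⟩
    exact ⟨hr, (hsorted.val_lt_iff_forall_head_lt hchild hxy hy hr).1 hrx⟩
  · rintro ⟨hr, hhead⟩
    exact ⟨((hparent r).1 hr).1, (hsorted.val_lt_iff_forall_head_lt hchild hxy hy hr).2 hhead⟩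

lemma SortsSuffixes.child_end_sub_add_one_eq_ncard (hsorted : SortsSuffixes T sa)
    (hbij : Function.Bijective sa) (hU : U ≠ []) (hparent : IsSAInterval T sa U p q)
    (hchild : IsSAInterval T sa (U ++ [c]) x y) (hxy : x ≤ y) (hy : y < T.length) :
    y - p + 1 = {e | e ∈ endSet U T ∧ ∀ b ∈ (T.drop e).head?, b ≤ c}.ncard := by
  obtain ⟨hpx, hyq⟩ := hparent.le_and_le_of_append hchild hxy hy
  rw [← ncard_ranks_eq_ncard_endSet hbij hU (fun t => ∀ b ∈ t.head?, b ≤ c),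
    show y - p + 1 = y + 1 - p by omega,
    ← Fin.ncard_setOf_val_mem_Ico (n := T.length) (by omega)]
  refine congrArg Set.ncard (Set.ext fun r => ?_)
  simp only [Set.mem_ofPred_eq, Nat.lt_succ_iff]
  constructor
  · rintro ⟨hpr, hry⟩
    have hr := (hparent r).2 ⟨hpr, by omega⟩
    exact ⟨hr, (hsorted.val_le_iff_forall_head_le hchild hxy hy hr).1 hry⟩
  · rintro ⟨hr, hhead⟩
    exact ⟨((hparent r).1 hr).1, (hsorted.val_le_iff_forall_head_le hchild hxy hy hr).2 hhead⟩

end SortedSuffixArray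

theorem class_child_intervals_same_offset_general {α : Type*} [LinearOrder α]
    (T : List α)
    (sa : Fin T.length → Fin T.length) (hbij : Function.Bijective sa)
    (hsorted : ∀ r s : Fin T.length, r ≤ s →
      ¬ List.Lex (· < ·) (T.drop (sa s)) (T.drop (sa r)))
    (W : List α) (m k : ℕ) (hm : W.length = m)
    (hk1 : 1 ≤ k) (hkm : k ≤ m)
    (hclass : ∀ i, 1 ≤ i → i ≤ k → endSet (W.drop (i - 1)) T = endSet W T)
    (c : α) (p q x y : ℕ → ℕ)
    (hint : ∀ i, 1 ≤ i → i ≤ k → ∀ r : Fin T.length,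
      (W.drop (i - 1) <+: T.drop (sa r)) ↔ (p i ≤ (r : ℕ) ∧ (r : ℕ) ≤ q i))
    (hy : ∀ i, 1 ≤ i → i ≤ k → y i < T.length)
    (hocc : ∀ i, 1 ≤ i → i ≤ k → (W.drop (i - 1) ++ [c]) <:+: T)
    (hchild : ∀ i, 1 ≤ i → i ≤ k → ∀ r : Fin T.length,
      ((W.drop (i - 1) ++ [c]) <+: T.drop (sa r)) ↔ (x i ≤ (r : ℕ) ∧ (r : ℕ) ≤ y i)) :
    ∀ i, 1 ≤ i → i ≤ k → x i - p i = x 1 - p 1 ∧ y i - p i = y 1 - p 1 := by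
  have offsets : ∀ i, 1 ≤ i → i ≤ k →
      x i - p i = {e | e ∈ endSet W T ∧ ∀ b ∈ (T.drop e).head?, b < c}.ncard ∧
      y i - p i + 1 = {e | e ∈ endSet W T ∧ ∀ b ∈ (T.drop e).head?, b ≤ c}.ncard := by
    intro i hi hik
    have hU : W.drop (i - 1) ≠ [] := by
      rw [← List.length_pos_iff, List.length_drop]
      omega
    have hsorted : SortsSuffixes T sa := hsorted
    have hparent : IsSAInterval T sa (W.drop (i - 1)) (p i) (q i) := hint i hi hik
    have hchild : IsSAInterval T sa (W.drop (i - 1) ++ [c]) (x i) (y i) := hchild i hi hik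
    have hxy := hchild.le_of_infix hbij (by simp) (hocc i hi hik)
    rw [← hclass i hi hik]
    exact ⟨hsorted.child_start_sub_eq_ncard hbij hU hparent hchild hxy (hy i hi hik),
      hsorted.child_end_sub_add_one_eq_ncard hbij hU hparent hchild hxy (hy i hi hik)⟩
  intro i hi hik
  have hi' := offsets i hi hik
  have h1 := offsets 1 le_rfl hk1
  omega

/-- BWT-interval offset property: with `[p i .. q i]` the suffix-array interval of the class
member `W[i..m] = W.drop (i-1)` of a maximal repeat `W` of `T`, and `[x i .. y i]` the
(nonempty) suffix-array interval of `W[i..m]c`, the offset of the child interval within the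
parent interval is the same for all members of the equivalence class:
`x i - p i = x 1 - p 1` and `y i - p i = y 1 - p 1`. -/
theorem class_child_intervals_same_offset {α : Type*} [LinearOrder α]
    (T T' : List α) (sent : α) (hT : T = T' ++ [sent]) (hsent : sent ∉ T')
    (hsmall : ∀ a ∈ T', sent < a)
    (sa : Fin T.length → Fin T.length) (hbij : Function.Bijective sa)
    (hsorted : ∀ r s : Fin T.length, r ≤ s →
      ¬ List.Lex (· < ·) (T.drop (sa s)) (T.drop (sa r)))
    (W : List α) (m k : ℕ) (hm : W.length = m) (hW : MaximalRepeat W T)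
    (hk1 : 1 ≤ k) (hkm : k ≤ m)
    (hclass : ∀ i, 1 ≤ i → i ≤ k → endSet (W.drop (i - 1)) T = endSet W T)
    (c : α) (p q x y : ℕ → ℕ)
    (hq : ∀ i, 1 ≤ i → i ≤ k → q i < T.length)
    (hint : ∀ i, 1 ≤ i → i ≤ k → ∀ r : Fin T.length,
      (W.drop (i - 1) <+: T.drop (sa r)) ↔ (p i ≤ (r : ℕ) ∧ (r : ℕ) ≤ q i))
    (hy : ∀ i, 1 ≤ i → i ≤ k → y i < T.length)
    (hocc : ∀ i, 1 ≤ i → i ≤ k → (W.drop (i - 1) ++ [c]) <:+: T)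
    (hchild : ∀ i, 1 ≤ i → i ≤ k → ∀ r : Fin T.length,
      ((W.drop (i - 1) ++ [c]) <+: T.drop (sa r)) ↔ (x i ≤ (r : ℕ) ∧ (r : ℕ) ≤ y i)) :
    ∀ i, 1 ≤ i → i ≤ k → x i - p i = x 1 - p 1 ∧ y i - p i = y 1 - p 1 :=
  class_child_intervals_same_offset_general T sa hbij hsorted W m k hm hk1 hkm hclass c p q x y hint
    hy hocc hchild
end
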